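/- Truth lemma for the canonical model, →ᵢ case: for a prime L-complete pair (Γ,Δ)_L in the canonical model and an L-formula B →ᵢ C with free variables among x₁,…,xₙ, one has B →ᵢ C ∈ Γ iff (Γ,Δ)_L ⊨ (B →ᵢ C)[x̲₁/x₁]⋯[x̲ₙ/xₙ], assuming the truth lemma holds for B and C. -/

import Mathlib

/-- Terms: variables (named by naturals) and constant symbols. -/
inductive Tm : Type
| var : ℕ → Tm
| const : ℕ → Tm
deriving DecidableEq

/-- Formulas of the combined language: atoms, ⊥, ∧, ∨, intuitionistic and
classical implication, intuitionistic and classical universal quantifier,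
and the existential quantifier. -/
inductive Fm : Type
| atom : ℕ → List Tm → Fm
| bot : Fm
| and : Fm → Fm → Fm
| or : Fm → Fm → Fm
| impI : Fm → Fm → Fm
| impC : Fm → Fm → Fm
| allI : ℕ → Fm → Fm
| allC : ℕ → Fm → Fm
| ex : ℕ → Fm → Fm
deriving DecidableEq

def Fm.top : Fm := .impI .bot .bot
def Fm.negC (A : Fm) : Fm := .impC A .bot
def Fm.negI (A : Fm) : Fm := .impI A .bot

def Tm.fv : Tm → Set ℕ
| .var x => {x}
| .const _ => ∅

/-- Free variables of a formula. -/
def Fm.fv : Fm → Set ℕ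
| .atom _ ts => {x | ∃ t ∈ ts, x ∈ t.fv}
| .bot => ∅
| .and A B => A.fv ∪ B.fv
| .or A B => A.fv ∪ B.fv
| .impI A B => A.fv ∪ B.fv
| .impC A B => A.fv ∪ B.fv
| .allI x A => A.fv \ {x}
| .allC x A => A.fv \ {x}
| .ex x A => A.fv \ {x}

/-- Bound variables of a formula. -/
def Fm.bv : Fm → Set ℕ
| .atom _ _ => ∅
| .bot => ∅
| .and A B => A.bv ∪ B.bv
| .or A B => A.bv ∪ B.bv
| .impI A B => A.bv ∪ B.bv
| .impC A B => A.bv ∪ B.bv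
| .allI x A => insert x A.bv
| .allC x A => insert x A.bv
| .ex x A => insert x A.bv

/-- All variables (free and bound) of a formula. -/
def Fm.vars : Fm → Set ℕ
| .atom _ ts => {x | ∃ t ∈ ts, x ∈ t.fv}
| .bot => ∅
| .and A B => A.vars ∪ B.vars
| .or A B => A.vars ∪ B.vars
| .impI A B => A.vars ∪ B.vars
| .impC A B => A.vars ∪ B.vars
| .allI x A => insert x A.vars
| .allC x A => insert x A.vars
| .ex x A => insert x A.vars

def Tm.subst (x : ℕ) (u : Tm) : Tm → Tm
| .var y => if y = x then u else .var y
| .const c => .const c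

/-- Substitution of term `u` for variable `x` (under the standing assumption
that bound and free variables are disjoint, this is clash-avoiding). -/
def Fm.subst : Fm → ℕ → Tm → Fm
| .atom P ts, x, u => .atom P (ts.map (Tm.subst x u))
| .bot, _, _ => .bot
| .and A B, x, u => .and (A.subst x u) (B.subst x u)
| .or A B, x, u => .or (A.subst x u) (B.subst x u)
| .impI A B, x, u => .impI (A.subst x u) (B.subst x u)
| .impC A B, x, u => .impC (A.subst x u) (B.subst x u)
| .allI y A, x, u => .allI y (if y = x then A else A.subst x u)
| .allC y A, x, u => .allC y (if y = x then A else A.subst x u)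
| .ex y A, x, u => .ex y (if y = x then A else A.subst x u)

/-- Persistent formulas: atoms, →ᵢ-formulas and ∀ᵢ-formulas. -/
def Fm.Persistent : Fm → Prop
| .atom _ _ => True
| .impI _ _ => True
| .allI _ _ => True
| _ => False

/-- Purely intuitionistic formulas (no →_c, no ∀_c). -/
def Fm.IsJ : Fm → Prop
| .atom _ _ => True
| .bot => True
| .and A B => A.IsJ ∧ B.IsJ
| .or A B => A.IsJ ∧ B.IsJ
| .impI A B => A.IsJ ∧ B.IsJ
| .impC _ _ => False
| .allI _ A => A.IsJ
| .allC _ _ => False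
| .ex _ A => A.IsJ

/-- Purely classical formulas (no →ᵢ, no ∀ᵢ). -/
def Fm.IsC : Fm → Prop
| .atom _ _ => True
| .bot => True
| .and A B => A.IsC ∧ B.IsC
| .or A B => A.IsC ∧ B.IsC
| .impI _ _ => False
| .impC A B => A.IsC ∧ B.IsC
| .allI _ _ => False
| .allC _ A => A.IsC
| .ex _ A => A.IsC

/-- A raw Kripke structure for the combined first-order language. -/
structure KModel (U : Type) where
  W : Type
  R : W → W → Prop
  D : W → Set U
  cI : ℕ → U
  V : ℕ → W → Set (List U)

/-- The conditions making a raw structure an intuitionistic Kripke model: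
`R` is a preorder, domains are nonempty, monotone, with nonempty
intersection, constants are rigid (interpreted in every domain), and the
predicate valuation is monotone (hereditary) along `R`. -/
structure KModel.IsKripke {U : Type} (M : KModel U) : Prop where
  wNonempty : Nonempty M.W
  refl : ∀ w, M.R w w
  trans : ∀ {w v u}, M.R w v → M.R v u → M.R w u
  dNonempty : ∀ w, (M.D w).Nonempty
  dMono : ∀ {w v}, M.R w v → M.D w ⊆ M.D v
  dInter : (⋂ w, M.D w).Nonempty
  cMem : ∀ c w, M.cI c ∈ M.D w
  vMono : ∀ P {w v}, M.R w v → M.V P w ⊆ M.V P v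

def Tm.val {U : Type} (M : KModel U) (g : ℕ → U) : Tm → U
| .var x => g x
| .const c => M.cI c

/-- Satisfaction of a formula at a world under an assignment. -/
def Fm.Sat {U : Type} (M : KModel U) : Fm → M.W → (ℕ → U) → Prop
| .atom P ts, w, g => ts.map (Tm.val M g) ∈ M.V P w
| .bot, _, _ => False
| .and A B, w, g => A.Sat M w g ∧ B.Sat M w g
| .or A B, w, g => A.Sat M w g ∨ B.Sat M w g
| .impI A B, w, g => ∀ v, M.R w v → A.Sat M v g → B.Sat M v g
| .impC A B, w, g => A.Sat M w g → B.Sat M w g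
| .allI x A, w, g => ∀ v, M.R w v → ∀ d ∈ M.D v, A.Sat M v (Function.update g x d)
| .allC x A, w, g => ∀ d ∈ M.D w, A.Sat M w (Function.update g x d)
| .ex x A, w, g => ∃ d ∈ M.D w, A.Sat M w (Function.update g x d)

/-- Multi-succedent semantic consequence: at every world of every Kripke
model, under any assignment into the domain, if all of `Γ` holds then some
member of `Δ` holds. -/
def Conseq (Γ Δ : List Fm) : Prop :=
  ∀ (U : Type) (M : KModel U), M.IsKripke → ∀ (w : M.W) (g : ℕ → U),
    (∀ x, g x ∈ M.D w) → (∀ A ∈ Γ, A.Sat M w g) → ∃ B ∈ Δ, B.Sat M w g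

/-- The sequent calculus G(FOC+J). -/
inductive Der : List Fm → List Fm → Prop
| id (A : Fm) : Der [A] [A]
| botL : Der [.bot] []
| perm {Γ Γ' Δ Δ'} : Γ.Perm Γ' → Δ.Perm Δ' → Der Γ Δ → Der Γ' Δ'
| wL {Γ Δ} (A) : Der Γ Δ → Der (A :: Γ) Δ
| wR {Γ Δ} (A) : Der Γ Δ → Der Γ (A :: Δ)
| cL {Γ Δ A} : Der (A :: A :: Γ) Δ → Der (A :: Γ) Δ
| cR {Γ Δ A} : Der Γ (A :: A :: Δ) → Der Γ (A :: Δ)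
| cut {Γ Δ P S A} : Der Γ (A :: Δ) → Der (A :: P) S → Der (Γ ++ P) (Δ ++ S)
| impIR {Θ A B} : (∀ C ∈ Θ, Fm.Persistent C) →
    Der (A :: Θ) [B] → Der Θ [.impI A B]
| impIL {Γ₁ Γ₂ Δ₁ Δ₂ A B} : Der Γ₁ (A :: Δ₁) → Der (B :: Γ₂) Δ₂ →
    Der (.impI A B :: (Γ₁ ++ Γ₂)) (Δ₁ ++ Δ₂)
| impCR {Γ Δ A B} : Der (A :: Γ) (B :: Δ) → Der Γ (.impC A B :: Δ)
| impCL {Γ₁ Γ₂ Δ₁ Δ₂ A B} : Der Γ₁ (A :: Δ₁) → Der (B :: Γ₂) Δ₂ →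
    Der (.impC A B :: (Γ₁ ++ Γ₂)) (Δ₁ ++ Δ₂)
| andR {Γ Δ A B} : Der Γ (A :: Δ) → Der Γ (B :: Δ) → Der Γ (.and A B :: Δ)
| andL1 {Γ Δ A B} : Der (A :: Γ) Δ → Der (.and A B :: Γ) Δ
| andL2 {Γ Δ A B} : Der (B :: Γ) Δ → Der (.and A B :: Γ) Δ
| orR1 {Γ Δ A B} : Der Γ (A :: Δ) → Der Γ (.or A B :: Δ)
| orR2 {Γ Δ A B} : Der Γ (B :: Δ) → Der Γ (.or A B :: Δ)
| orL {Γ Δ A B} : Der (A :: Γ) Δ → Der (B :: Γ) Δ → Der (.or A B :: Γ) Δ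
| allIR {Θ x z A} : (∀ C ∈ Θ, Fm.Persistent C) →
    (∀ C ∈ Θ, z ∉ Fm.fv C) → z ∉ Fm.fv (.allI x A) → z ∉ Fm.bv A →
    Der Θ [A.subst x (.var z)] → Der Θ [.allI x A]
| allIL {Γ Δ x A} (t : Tm) : (∀ y ∈ t.fv, y ∉ Fm.bv A) →
    Der (A.subst x t :: Γ) Δ → Der (.allI x A :: Γ) Δ
| allCR {Γ Δ x z A} : (∀ C ∈ Γ, z ∉ Fm.fv C) → (∀ C ∈ Δ, z ∉ Fm.fv C) →
    z ∉ Fm.fv (.allC x A) → z ∉ Fm.bv A →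
    Der Γ (A.subst x (.var z) :: Δ) → Der Γ (.allC x A :: Δ)
| allCL {Γ Δ x A} (t : Tm) : (∀ y ∈ t.fv, y ∉ Fm.bv A) →
    Der (A.subst x t :: Γ) Δ → Der (.allC x A :: Γ) Δ
| exR {Γ Δ x A} (t : Tm) : (∀ y ∈ t.fv, y ∉ Fm.bv A) →
    Der Γ (A.subst x t :: Δ) → Der Γ (.ex x A :: Δ)
| exL {Γ Δ x z A} : (∀ C ∈ Γ, z ∉ Fm.fv C) → (∀ C ∈ Δ, z ∉ Fm.fv C) →
    z ∉ Fm.fv (.ex x A) → z ∉ Fm.bv A →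
    Der (A.subst x (.var z) :: Γ) Δ → Der (.ex x A :: Γ) Δ

/-- A term of syntax `L` (a syntax is identified with its set of variables). -/
def TmInSyn (L : Set ℕ) (t : Tm) : Prop := t.fv ⊆ L

/-- An `L`-formula: all its variables belong to the syntax `L`. -/
def InSyn (L : Set ℕ) (A : Fm) : Prop := A.vars ⊆ L

/-- Derivability for (possibly infinite) sets of formulas: some finite
sub-sequent is derivable in G(FOC+J). -/
def SetDer (Γ Δ : Set Fm) : Prop :=
  ∃ G D : List Fm, (∀ A ∈ G, A ∈ Γ) ∧ (∀ A ∈ D, A ∈ Δ) ∧ Der G D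

/-- A prime pair with respect to a syntax `L`. -/
structure PrimePair (L : Set ℕ) (Γ Δ : Set Fm) : Prop where
  syntaxL : ∀ A ∈ Γ ∪ Δ, InSyn L A
  theory : ∀ A, InSyn L A → SetDer Γ {A} → A ∈ Γ
  underiv : ¬ SetDer Γ Δ
  prime : ∀ A B, Fm.or A B ∈ Γ → A ∈ Γ ∨ B ∈ Γ
  exProp : ∀ x A, Fm.ex x A ∈ Γ → ∃ t : Tm, TmInSyn L t ∧ A.subst x t ∈ Γ
  allCProp : ∀ x A, Fm.allC x A ∈ Δ → ∃ t : Tm, TmInSyn L t ∧ A.subst x t ∈ Δ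

/-- `L`-completeness of a pair: every `L`-formula is in `Γ` or in `Δ`. -/
def LComplete (L : Set ℕ) (Γ Δ : Set Fm) : Prop := Γ ∪ Δ = {A | InSyn L A}

/-- The base syntax 𝓛: its variables are the even naturals (so that 𝓛⁺,
with all variables, extends it by countably many fresh variables). -/
def Lbase : Set ℕ := {n | Even n}

/-- `L ⊏ L'`: the syntax `L'` extends `L` by (at least) countably many
fresh variables. -/
def Sqsub (L L' : Set ℕ) : Prop := L ⊆ L' ∧ (L' \ L).Infinite

/-- Worlds of the canonical model: prime `L`-complete pairs with
𝓛 ⊏ L ⊏ 𝓛⁺. -/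
structure CWorld : Type where
  L : Set ℕ
  Γ : Set Fm
  Δ : Set Fm
  hL1 : Sqsub Lbase L
  hL2 : Sqsub L Set.univ
  prime : PrimePair L Γ Δ
  complete : LComplete L Γ Δ

/-- The canonical model: accessibility is preservation of persistent
formulas (atoms, →ᵢ-formulas, ∀ᵢ-formulas); the domain at `(Γ,Δ)_L` is the
set of terms of `L`; a tuple of terms satisfies `P` iff the corresponding
atomic formula belongs to `Γ`. -/
def CModel : KModel Tm where
  W := CWorld
  R := fun w v =>
    (∀ P ts, Fm.atom P ts ∈ w.Γ → Fm.atom P ts ∈ v.Γ) ∧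
    (∀ A B, Fm.impI A B ∈ w.Γ → Fm.impI A B ∈ v.Γ) ∧
    (∀ x A, Fm.allI x A ∈ w.Γ → Fm.allI x A ∈ v.Γ)
  D := fun w => {t | TmInSyn w.L t}
  cI := Tm.const
  V := fun P w => {ts | Fm.atom P ts ∈ w.Γ}

/-!
Left to right: `R` preserves `B →ᵢ C`, and the `Γ` of a prime pair is a theory, hence closed
under modus ponens. Right to left: if `B →ᵢ C ∉ Γ`, let `Θ` be the persistent part of `Γ`. Then
`B, Θ ⊬ C`, for otherwise the →ᵢ-right rule, whose context must be persistent, would derive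
`B →ᵢ C` from `Θ ⊆ Γ`. Choose a syntax `L'` with `L ⊏ L' ⊏ 𝓛⁺` (split `𝓛⁺ \ L` into two
infinite halves) and extend `(Θ ∪ {B}, {C})` to a prime `L'`-complete pair à la Lindenbaum:
enumerate the `L'`-formulas and put each on the left unless that makes the pair derivable,
adding a Henkin instance, at a variable of `L' \ L` not used so far, for `∃` on the left and
`∀_c` on the right. Since it contains `Θ`, this pair is an `R`-successor of `(Γ, Δ)_L`, and it
holds `B` but not `C`.
-/

instance : Encodable Tm :=
  Encodable.ofEquiv (ℕ ⊕ ℕ)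
    ⟨fun | .var n => .inl n | .const c => .inr c,
     fun | .inl n => .var n | .inr c => .const c,
     by rintro (n | c) <;> rfl, by rintro (n | c) <;> rfl⟩

def Fm.encode : Fm → ℕ
| .atom P ts => Nat.pair 0 (Nat.pair P (Encodable.encode ts))
| .bot => Nat.pair 1 0
| .and A B => Nat.pair 2 (Nat.pair A.encode B.encode)
| .or A B => Nat.pair 3 (Nat.pair A.encode B.encode)
| .impI A B => Nat.pair 4 (Nat.pair A.encode B.encode)
| .impC A B => Nat.pair 5 (Nat.pair A.encode B.encode)
| .allI x A => Nat.pair 6 (Nat.pair x A.encode)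
| .allC x A => Nat.pair 7 (Nat.pair x A.encode)
| .ex x A => Nat.pair 8 (Nat.pair x A.encode)

theorem Fm.encode_injective : Function.Injective Fm.encode := by
  intro A
  induction A <;> intro B h <;> cases B <;>
    simp_all [Fm.encode, Nat.pair_eq_pair, Encodable.encode_inj] <;> tauto

instance : Countable Fm := Fm.encode_injective.countable

theorem Tm.fv_subst (x : ℕ) (u t : Tm) : (Tm.subst x u t).fv ⊆ t.fv ∪ u.fv := by
  cases t with
  | var y => by_cases h : y = x <;> simp [Tm.subst, h]
  | const => simp [Tm.subst, Tm.fv]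

namespace Fm

theorem vars_finite (A : Fm) : A.vars.Finite := by
  induction A with
  | atom P ts =>
    have : {x | ∃ t ∈ ts, x ∈ t.fv} = ⋃ t ∈ ts, t.fv := by ext; simp
    rw [vars, this]
    exact ts.finite_toSet.biUnion fun t _ => by cases t <;> simp [Tm.fv]
  | bot => simp [vars]
  | and _ _ ihA ihB | or _ _ ihA ihB | impI _ _ ihA ihB | impC _ _ ihA ihB => exact ihA.union ihB
  | allI x _ ih | allC x _ ih | ex x _ ih => exact ih.insert x

theorem fv_subset_vars (A : Fm) : A.fv ⊆ A.vars := by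
  induction A with
  | atom | bot => exact subset_rfl
  | and _ _ ihA ihB | or _ _ ihA ihB | impI _ _ ihA ihB | impC _ _ ihA ihB =>
    exact Set.union_subset_union ihA ihB
  | allI x _ ih | allC x _ ih | ex x _ ih =>
    exact Set.sdiff_subset.trans (ih.trans (Set.subset_insert x _))

theorem bv_subset_vars (A : Fm) : A.bv ⊆ A.vars := by
  induction A with
  | atom | bot => simp [bv]
  | and _ _ ihA ihB | or _ _ ihA ihB | impI _ _ ihA ihB | impC _ _ ihA ihB =>
    exact Set.union_subset_union ihA ihB
  | allI x _ ih | allC x _ ih | ex x _ ih => exact Set.insert_subset_insert ih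

theorem vars_subst (A : Fm) (x : ℕ) (u : Tm) : (A.subst x u).vars ⊆ A.vars ∪ u.fv := by
  induction A with
  | atom P ts =>
    rintro y ⟨_, hmem, hy⟩
    obtain ⟨t, ht, rfl⟩ := List.mem_map.1 hmem
    exact (Tm.fv_subst x u t hy).imp_left fun h => ⟨t, ht, h⟩
  | bot => simp [subst, vars]
  | and _ _ ihA ihB | or _ _ ihA ihB | impI _ _ ihA ihB | impC _ _ ihA ihB =>
    exact (Set.union_subset_union ihA ihB).trans (Set.union_union_distrib_right _ _ _).superset
  | allI y _ ih | allC y _ ih | ex y _ ih =>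
    by_cases h : y = x
    · simp only [subst, if_pos h, vars]; exact Set.subset_union_left
    · simp only [subst, if_neg h, vars, Set.insert_union]; exact Set.insert_subset_insert ih

end Fm

theorem inSyn_or {L : Set ℕ} {A B : Fm} : InSyn L (.or A B) ↔ InSyn L A ∧ InSyn L B := by
  simp [InSyn, Fm.vars, Set.union_subset_iff]

theorem inSyn_impI {L : Set ℕ} {A B : Fm} : InSyn L (.impI A B) ↔ InSyn L A ∧ InSyn L B := by
  simp [InSyn, Fm.vars, Set.union_subset_iff]

structure ListStructural {α : Type*} (P : List α → Prop) : Prop where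
  perm : ∀ {l l' : List α}, l.Perm l' → P l → P l'
  weaken : ∀ (a : α) {l : List α}, P l → P (a :: l)
  contract : ∀ (a : α) {l : List α}, P (a :: a :: l) → P (a :: l)

namespace ListStructural

variable {α : Type*} {P : List α → Prop}

theorem weaken_append (hP : ListStructural P) (m : List α) {l : List α} (h : P l) :
    P (m ++ l) := by
  induction m with
  | nil => exact h
  | cons a m ih => exact hP.weaken a ih

theorem of_subset (hP : ListStructural P) {l l' : List α} (h : P l) (hs : l ⊆ l') : P l' := by
  induction hn : l.length using Nat.strong_induction_on generalizing l with
  | _ n ih =>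
    by_cases hnd : l.Nodup
    · obtain ⟨k, hkl, hk⟩ := hnd.subperm hs
      obtain ⟨m, hm⟩ := hk.exists_perm_append
      exact hP.perm (hm.trans List.perm_append_comm).symm
        (hP.weaken_append m (hP.perm hkl.symm h))
    · obtain ⟨a, ha⟩ := not_forall_not.1 (mt List.nodup_iff_sublist.2 hnd)
      obtain ⟨r, hr⟩ := ha.exists_perm_append
      have hlen : (a :: r).length < n := by simp [← hn, hr.length_eq]
      have hsub : a :: r ⊆ l' := fun b hb => hs (hr.symm.subset (List.mem_cons_of_mem a hb))
      exact ih _ hlen (hP.contract a (hP.perm hr h)) hsub rfl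

end ListStructural

theorem Der.structural_left (D : List Fm) : ListStructural (Der · D) :=
  ⟨fun h => Der.perm h (.refl D), fun a => Der.wL a, fun _ => Der.cL⟩

theorem Der.structural_right (G : List Fm) : ListStructural (Der G) :=
  ⟨fun h => Der.perm (.refl G) h, fun a => Der.wR a, fun _ => Der.cR⟩

theorem Der.mono {G G' D D' : List Fm} (h : Der G D) (hG : G ⊆ G') (hD : D ⊆ D') :
    Der G' D' :=
  (Der.structural_right G').of_subset ((Der.structural_left D).of_subset h hG) hD

theorem List.subset_cons_filter_ne {α : Type*} [DecidableEq α] (A : α) (G : List α) :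
    G ⊆ A :: G.filter (· ≠ A) := by
  intro X hX
  by_cases hXA : X = A <;> simp [hXA, hX]

namespace SetDer

variable {Γ Γ' Δ Δ' : Set Fm}

theorem mono (h : SetDer Γ Δ) (hΓ : Γ ⊆ Γ') (hΔ : Δ ⊆ Δ') : SetDer Γ' Δ' :=
  let ⟨G, D, hG, hD, d⟩ := h
  ⟨G, D, fun A hA => hΓ (hG A hA), fun A hA => hΔ (hD A hA), d⟩

theorem of_mem {A : Fm} (hΓ : A ∈ Γ) (hΔ : A ∈ Δ) : SetDer Γ Δ :=
  ⟨[A], [A], by simpa using hΓ, by simpa using hΔ, Der.id A⟩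

theorem exists_der_cons_left {A : Fm} (h : SetDer (insert A Γ) Δ) :
    ∃ G D, (∀ X ∈ G, X ∈ Γ) ∧ (∀ X ∈ D, X ∈ Δ) ∧ Der (A :: G) D := by
  obtain ⟨G, D, hG, hD, d⟩ := h
  refine ⟨G.filter (· ≠ A), D, fun X hX => ?_, hD,
    d.mono (List.subset_cons_filter_ne A G) (List.Subset.refl _)⟩
  rw [List.mem_filter, decide_eq_true_iff] at hX
  exact (hG X hX.1).resolve_left hX.2

theorem exists_der_cons_right {A : Fm} (h : SetDer Γ (insert A Δ)) :
    ∃ G D, (∀ X ∈ G, X ∈ Γ) ∧ (∀ X ∈ D, X ∈ Δ) ∧ Der G (A :: D) := by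
  obtain ⟨G, D, hG, hD, d⟩ := h
  refine ⟨G, D.filter (· ≠ A), hG, fun X hX => ?_,
    d.mono (List.Subset.refl _) (List.subset_cons_filter_ne A D)⟩
  rw [List.mem_filter, decide_eq_true_iff] at hX
  exact (hD X hX.1).resolve_left hX.2

theorem cut {A : Fm} (h₁ : SetDer Γ (insert A Δ)) (h₂ : SetDer (insert A Γ) Δ) :
    SetDer Γ Δ := by
  obtain ⟨G₁, D₁, hG₁, hD₁, d₁⟩ := h₁.exists_der_cons_right
  obtain ⟨G₂, D₂, hG₂, hD₂, d₂⟩ := h₂.exists_der_cons_left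
  refine ⟨G₁ ++ G₂, D₁ ++ D₂, ?_, ?_, d₁.cut d₂⟩ <;> simp only [List.mem_append] <;>
    rintro X (hX | hX)
  exacts [hG₁ X hX, hG₂ X hX, hD₁ X hX, hD₂ X hX]

theorem of_impI_mem {B C : Fm} (hBC : Fm.impI B C ∈ Γ) (hB : B ∈ Γ) (hC : C ∈ Δ) :
    SetDer Γ Δ := by
  refine ⟨[.impI B C, B], [C], by simp [hBC, hB], by simp [hC], ?_⟩
  simpa using Der.impIL (Γ₁ := [B]) (Γ₂ := []) (Δ₁ := []) (Δ₂ := [C]) (Der.id B) (Der.id C)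

theorem of_or_mem {A B : Fm} (hAB : Fm.or A B ∈ Γ) (hA : A ∈ Δ) (hB : B ∈ Δ) :
    SetDer Γ Δ :=
  ⟨[.or A B], [A, B], by simp [hAB], by simp [hA, hB],
    .orL ((Der.id A).mono (List.Subset.refl _) (by simp))
      ((Der.id B).mono (List.Subset.refl _) (by simp))⟩

theorem impI_right {Θ : Set Fm} {B C : Fm} (hΘ : ∀ X ∈ Θ, X.Persistent)
    (h : SetDer (insert B Θ) {C}) : SetDer Θ {.impI B C} := by
  obtain ⟨G, D, hG, hD, d⟩ := h.exists_der_cons_left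
  refine ⟨G, [.impI B C], hG, by simp, .impIR (fun X hX => hΘ X (hG X hX)) ?_⟩
  exact d.mono (List.Subset.refl _) fun X hX => by simpa using hD X hX

theorem ex_left {x z : ℕ} {A : Fm} (hΓ : ∀ C ∈ Γ, z ∉ C.vars) (hΔ : ∀ C ∈ Δ, z ∉ C.vars)
    (hA : z ∉ (Fm.ex x A).vars) (h : SetDer (insert (A.subst x (.var z)) Γ) Δ) :
    SetDer (insert (.ex x A) Γ) Δ := by
  obtain ⟨G, D, hG, hD, d⟩ := h.exists_der_cons_left
  refine ⟨.ex x A :: G, D, List.forall_mem_cons.2 ⟨Set.mem_insert _ _,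
    fun X hX => Set.mem_insert_of_mem _ (hG X hX)⟩, hD, .exL ?_ ?_ ?_ ?_ d⟩
  · exact fun C hC hz => hΓ C (hG C hC) (C.fv_subset_vars hz)
  · exact fun C hC hz => hΔ C (hD C hC) (C.fv_subset_vars hz)
  · exact fun hz => hA (Fm.fv_subset_vars _ hz)
  · exact fun hz => hA (Set.mem_insert_of_mem x (A.bv_subset_vars hz))

theorem allC_right {x z : ℕ} {A : Fm} (hΓ : ∀ C ∈ Γ, z ∉ C.vars) (hΔ : ∀ C ∈ Δ, z ∉ C.vars)
    (hA : z ∉ (Fm.allC x A).vars) (h : SetDer Γ (insert (A.subst x (.var z)) Δ)) :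
    SetDer Γ (insert (.allC x A) Δ) := by
  obtain ⟨G, D, hG, hD, d⟩ := h.exists_der_cons_right
  refine ⟨G, .allC x A :: D, hG, List.forall_mem_cons.2 ⟨Set.mem_insert _ _,
    fun X hX => Set.mem_insert_of_mem _ (hD X hX)⟩, .allCR ?_ ?_ ?_ ?_ d⟩
  · exact fun C hC hz => hΓ C (hG C hC) (C.fv_subset_vars hz)
  · exact fun C hC hz => hΔ C (hD C hC) (C.fv_subset_vars hz)
  · exact fun hz => hA (Fm.fv_subset_vars _ hz)
  · exact fun hz => hA (Set.mem_insert_of_mem x (A.bv_subset_vars hz))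

theorem not_iUnion_of_monotone {Γ Δ : ℕ → Set Fm} (hΓ : Monotone Γ) (hΔ : Monotone Δ)
    (h : ∀ n, ¬SetDer (Γ n) (Δ n)) : ¬SetDer (⋃ n, Γ n) (⋃ n, Δ n) := by
  rintro ⟨G, D, hG, hD, d⟩
  obtain ⟨m, hm⟩ := hΓ.directed_le.exists_mem_subset_of_finset_subset_biUnion
    (s := G.toFinset) (by simpa [Set.subset_def] using hG)
  obtain ⟨k, hk⟩ := hΔ.directed_le.exists_mem_subset_of_finset_subset_biUnion
    (s := D.toFinset) (by simpa [Set.subset_def] using hD)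
  refine h (max m k) ⟨G, D, fun A hA => hΓ (le_max_left m k) (hm ?_),
    fun A hA => hΔ (le_max_right m k) (hk ?_), d⟩ <;> simpa

end SetDer

theorem PrimePair.of_complete {L : Set ℕ} {Γ Δ : Set Fm} (hsyn : ∀ A ∈ Γ ∪ Δ, InSyn L A)
    (hcomp : ∀ A, InSyn L A → A ∈ Γ ∨ A ∈ Δ) (hnd : ¬SetDer Γ Δ)
    (hex : ∀ x A, Fm.ex x A ∈ Γ → ∃ t : Tm, TmInSyn L t ∧ A.subst x t ∈ Γ)
    (hall : ∀ x A, Fm.allC x A ∈ Δ → ∃ t : Tm, TmInSyn L t ∧ A.subst x t ∈ Δ) :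
    PrimePair L Γ Δ where
  syntaxL := hsyn
  theory A hA hd :=
    (hcomp A hA).resolve_right fun h => hnd (hd.mono le_rfl (Set.singleton_subset_iff.2 h))
  underiv := hnd
  prime A B h := by
    have hAB := inSyn_or.1 (hsyn _ (.inl h))
    by_contra! hn
    exact hnd (.of_or_mem h ((hcomp A hAB.1).resolve_left hn.1) ((hcomp B hAB.2).resolve_left hn.2))
  exProp := hex
  allCProp := hall

theorem PrimePair.mem_of_impI_mem {L : Set ℕ} {Γ Δ : Set Fm} (hp : PrimePair L Γ Δ) {B C : Fm}
    (hBC : Fm.impI B C ∈ Γ) (hB : B ∈ Γ) : C ∈ Γ :=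
  hp.theory C (inSyn_impI.1 (hp.syntaxL _ (.inl hBC))).2 (.of_impI_mem hBC hB rfl)

namespace Fm

def exWitness (z : ℕ) : Fm → Set Fm
| .ex x A => {A.subst x (.var z)}
| _ => ∅

def allCWitness (z : ℕ) : Fm → Set Fm
| .allC x A => {A.subst x (.var z)}
| _ => ∅

theorem vars_subset_of_mem_exWitness {z : ℕ} {A B : Fm} (hB : B ∈ A.exWitness z) :
    B.vars ⊆ A.vars ∪ {z} := by
  cases A <;> simp only [exWitness, Set.mem_singleton_iff, Set.mem_empty_iff_false] at hB
  subst hB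
  exact (vars_subst _ _ _).trans (Set.union_subset_union_left _ (Set.subset_insert _ _))

theorem vars_subset_of_mem_allCWitness {z : ℕ} {A B : Fm} (hB : B ∈ A.allCWitness z) :
    B.vars ⊆ A.vars ∪ {z} := by
  cases A <;> simp only [allCWitness, Set.mem_singleton_iff, Set.mem_empty_iff_false] at hB
  subst hB
  exact (vars_subst _ _ _).trans (Set.union_subset_union_left _ (Set.subset_insert _ _))

end Fm

def pairVars (s : Set Fm × Set Fm) : Set ℕ := ⋃ A ∈ s.1 ∪ s.2, A.vars

theorem notMem_vars_of_notMem_pairVars {s : Set Fm × Set Fm} {z : ℕ} (hz : z ∉ pairVars s)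
    {C : Fm} (hC : C ∈ s.1 ∪ s.2) : z ∉ C.vars :=
  fun h => hz (Set.mem_biUnion hC h)

theorem not_setDer_union_exWitness {s : Set Fm × Set Fm} {A : Fm} {z : ℕ}
    (hz : z ∉ pairVars s ∪ A.vars) (h : ¬SetDer (insert A s.1) s.2) :
    ¬SetDer (insert A s.1 ∪ A.exWitness z) s.2 := by
  cases A with
  | ex x A =>
    rw [Fm.exWitness, Set.union_singleton]
    intro hd
    refine h (Set.insert_idem (Fm.ex x A) s.1 ▸ SetDer.ex_left ?_ ?_ (fun h => hz (.inr h)) hd)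
    · rintro C (rfl | hC)
      exacts [fun h => hz (.inr h), notMem_vars_of_notMem_pairVars (mt Or.inl hz) (.inl hC)]
    · exact fun C hC => notMem_vars_of_notMem_pairVars (mt Or.inl hz) (.inr hC)
  | _ => simpa [Fm.exWitness] using h

theorem not_setDer_union_allCWitness {s : Set Fm × Set Fm} {A : Fm} {z : ℕ}
    (hz : z ∉ pairVars s ∪ A.vars) (h : ¬SetDer s.1 (insert A s.2)) :
    ¬SetDer s.1 (insert A s.2 ∪ A.allCWitness z) := by
  cases A with
  | allC x A =>
    rw [Fm.allCWitness, Set.union_singleton]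
    intro hd
    refine h (Set.insert_idem (Fm.allC x A) s.2 ▸ SetDer.allC_right ?_ ?_ (fun h => hz (.inr h)) hd)
    · exact fun C hC => notMem_vars_of_notMem_pairVars (mt Or.inl hz) (.inl hC)
    · rintro C (rfl | hC)
      exacts [fun h => hz (.inr h), notMem_vars_of_notMem_pairVars (mt Or.inl hz) (.inr hC)]
  | _ => simpa [Fm.allCWitness] using h

namespace Lindenbaum

variable (Z : Set ℕ)

noncomputable def fresh (s : Set Fm × Set Fm) (A : Fm) : ℕ :=
  Classical.epsilon (· ∈ Z \ (pairVars s ∪ A.vars))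

open Classical in
noncomputable def step (s : Set Fm × Set Fm) (A : Fm) : Set Fm × Set Fm :=
  if SetDer (insert A s.1) s.2 then (s.1, insert A s.2 ∪ A.allCWitness (fresh Z s A))
  else (insert A s.1 ∪ A.exWitness (fresh Z s A), s.2)

variable {Z}

theorem le_step (s : Set Fm × Set Fm) (A : Fm) : s ≤ step Z s A := by
  unfold step
  split_ifs
  · exact ⟨le_rfl, (Set.subset_insert _ _).trans Set.subset_union_left⟩
  · exact ⟨(Set.subset_insert _ _).trans Set.subset_union_left, le_rfl⟩

theorem mem_step (s : Set Fm × Set Fm) (A : Fm) : A ∈ (step Z s A).1 ∨ A ∈ (step Z s A).2 := by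
  unfold step
  split_ifs <;> simp

theorem ex_mem_step (s : Set Fm × Set Fm) (x : ℕ) (A : Fm) :
    Fm.ex x A ∈ (step Z s (.ex x A)).2 ∨
      A.subst x (.var (fresh Z s (.ex x A))) ∈ (step Z s (.ex x A)).1 := by
  unfold step
  split_ifs <;> simp [Fm.exWitness]

theorem allC_mem_step (s : Set Fm × Set Fm) (x : ℕ) (A : Fm) :
    Fm.allC x A ∈ (step Z s (.allC x A)).1 ∨
      A.subst x (.var (fresh Z s (.allC x A))) ∈ (step Z s (.allC x A)).2 := by
  unfold step
  split_ifs <;> simp [Fm.allCWitness]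

theorem pairVars_step_subset (s : Set Fm × Set Fm) (A : Fm) :
    pairVars (step Z s A) ⊆ pairVars s ∪ A.vars ∪ {fresh Z s A} := by
  have hA : A.vars ⊆ pairVars s ∪ A.vars ∪ {fresh Z s A} :=
    Set.subset_union_right.trans Set.subset_union_left
  have hs : ∀ B ∈ s.1 ∪ s.2, B.vars ⊆ pairVars s ∪ A.vars ∪ {fresh Z s A} :=
    fun B hB => (Set.subset_biUnion_of_mem hB).trans
      (Set.subset_union_left.trans Set.subset_union_left)
  have hW : A.vars ∪ {fresh Z s A} ⊆ pairVars s ∪ A.vars ∪ {fresh Z s A} :=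
    Set.union_subset_union_left _ Set.subset_union_right
  unfold step
  split_ifs <;> refine Set.iUnion₂_subset fun B hB => ?_ <;>
    simp only [Set.mem_union, Set.mem_insert_iff] at hB
  · rcases hB with hB | (rfl | hB) | hB
    exacts [hs B (.inl hB), hA, hs B (.inr hB), hW.trans' (Fm.vars_subset_of_mem_allCWitness hB)]
  · rcases hB with ((rfl | hB) | hB) | hB
    exacts [hA, hs B (.inl hB), hW.trans' (Fm.vars_subset_of_mem_exWitness hB), hs B (.inr hB)]

structure Good (L' Z : Set ℕ) (s : Set Fm × Set Fm) : Prop where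
  not_setDer : ¬SetDer s.1 s.2
  pairVars_subset : pairVars s ⊆ L'
  /-- keeps a fresh variable of `Z` available at every stage -/
  finite_inter : (pairVars s ∩ Z).Finite

variable {L' : Set ℕ}

theorem Good.fresh_mem (hZ : Z.Infinite) {s : Set Fm × Set Fm} (hs : Good L' Z s) (A : Fm) :
    fresh Z s A ∈ Z \ (pairVars s ∪ A.vars) := by
  refine Classical.epsilon_spec (p := (· ∈ Z \ (pairVars s ∪ A.vars))) ?_
  obtain ⟨z, hzZ, hz⟩ := (hZ.sdiff (hs.finite_inter.union A.vars_finite)).nonempty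
  exact ⟨z, hzZ, fun h => hz (h.imp_left fun h => ⟨h, hzZ⟩)⟩

theorem good_step (hZL' : Z ⊆ L') (hZ : Z.Infinite) {s : Set Fm × Set Fm} (hs : Good L' Z s)
    {A : Fm} (hA : InSyn L' A) : Good L' Z (step Z s A) := by
  have hz := hs.fresh_mem hZ A
  refine ⟨?_, (pairVars_step_subset s A).trans ?_, ?_⟩
  · unfold step
    split_ifs with h
    · exact not_setDer_union_allCWitness hz.2 fun h' => hs.not_setDer (h'.cut h)
    · exact not_setDer_union_exWitness hz.2 h
  · exact Set.union_subset (Set.union_subset hs.pairVars_subset hA)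
      (Set.singleton_subset_iff.2 (hZL' hz.1))
  · refine ((hs.finite_inter.union A.vars_finite).union
      (Set.finite_singleton (fresh Z s A))).subset ?_
    rintro y ⟨hy, hyZ⟩
    rcases pairVars_step_subset s A hy with (hy | hy) | hy
    exacts [.inl (.inl ⟨hy, hyZ⟩), .inl (.inr hy), .inr hy]

variable (Z) in
noncomputable def chain (e : ℕ → Fm) (s₀ : Set Fm × Set Fm) : ℕ → Set Fm × Set Fm
| 0 => s₀
| n + 1 => step Z (chain e s₀ n) (e n)

section Limit

variable {e : ℕ → Fm} {s₀ : Set Fm × Set Fm}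

theorem monotone_chain : Monotone (chain Z e s₀) :=
  monotone_nat_of_le_succ fun n => le_step _ (e n)

theorem good_chain (hZL' : Z ⊆ L') (hZ : Z.Infinite) (he : ∀ n, InSyn L' (e n))
    (h₀ : Good L' Z s₀) (n : ℕ) : Good L' Z (chain Z e s₀ n) := by
  induction n with
  | zero => exact h₀
  | succ n ih => exact good_step hZL' hZ ih (he n)

variable (Z e s₀) in
def limit : Set Fm × Set Fm := (⋃ n, (chain Z e s₀ n).1, ⋃ n, (chain Z e s₀ n).2)

theorem le_limit (n : ℕ) : chain Z e s₀ n ≤ limit Z e s₀ :=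
  ⟨Set.subset_iUnion (fun n => (chain Z e s₀ n).1) n,
    Set.subset_iUnion (fun n => (chain Z e s₀ n).2) n⟩

theorem mem_limit_of_inSyn (hsurj : ∀ A, InSyn L' A → ∃ n, e n = A) {A : Fm}
    (hA : InSyn L' A) : A ∈ (limit Z e s₀).1 ∨ A ∈ (limit Z e s₀).2 := by
  obtain ⟨n, rfl⟩ := hsurj A hA
  exact (mem_step (chain Z e s₀ n) (e n)).imp (fun h => (le_limit (n + 1)).1 h)
    (fun h => (le_limit (n + 1)).2 h)

variable (hZL' : Z ⊆ L') (hZ : Z.Infinite) (he : ∀ n, InSyn L' (e n)) (h₀ : Good L' Z s₀)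
include hZL' hZ he h₀

theorem not_setDer_limit : ¬SetDer (limit Z e s₀).1 (limit Z e s₀).2 :=
  SetDer.not_iUnion_of_monotone (monotone_fst.comp monotone_chain)
    (monotone_snd.comp monotone_chain)
    fun n => (good_chain hZL' hZ he h₀ n).not_setDer

theorem inSyn_of_mem_limit {A : Fm} (hA : A ∈ (limit Z e s₀).1 ∪ (limit Z e s₀).2) :
    InSyn L' A := by
  obtain ⟨n, hn⟩ : ∃ n, A ∈ (chain Z e s₀ n).1 ∪ (chain Z e s₀ n).2 := by
    simpa [limit, Set.mem_iUnion, exists_or] using hA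
  exact (Set.subset_biUnion_of_mem hn).trans (good_chain hZL' hZ he h₀ n).pairVars_subset

theorem exists_subst_mem_limit_of_ex (hsurj : ∀ A, InSyn L' A → ∃ n, e n = A) {x : ℕ} {A : Fm}
    (h : Fm.ex x A ∈ (limit Z e s₀).1) :
    ∃ t : Tm, TmInSyn L' t ∧ A.subst x t ∈ (limit Z e s₀).1 := by
  obtain ⟨n, hn⟩ := hsurj _ (inSyn_of_mem_limit hZL' hZ he h₀ (.inl h))
  have hz := (good_chain hZL' hZ he h₀ n).fresh_mem hZ (e n)
  have hstep : chain Z e s₀ (n + 1) = step Z (chain Z e s₀ n) (.ex x A) := by rw [chain, hn]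
  rw [hn] at hz
  refine ⟨.var (fresh Z (chain Z e s₀ n) (.ex x A)), Set.singleton_subset_iff.2 (hZL' hz.1), ?_⟩
  rcases ex_mem_step (chain Z e s₀ n) x A with h' | h'
  · exact absurd (SetDer.of_mem h ((le_limit (n + 1)).2 (hstep ▸ h')))
      (not_setDer_limit hZL' hZ he h₀)
  · exact (le_limit (n + 1)).1 (hstep ▸ h')

theorem exists_subst_mem_limit_of_allC (hsurj : ∀ A, InSyn L' A → ∃ n, e n = A) {x : ℕ}
    {A : Fm} (h : Fm.allC x A ∈ (limit Z e s₀).2) :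
    ∃ t : Tm, TmInSyn L' t ∧ A.subst x t ∈ (limit Z e s₀).2 := by
  obtain ⟨n, hn⟩ := hsurj _ (inSyn_of_mem_limit hZL' hZ he h₀ (.inr h))
  have hz := (good_chain hZL' hZ he h₀ n).fresh_mem hZ (e n)
  have hstep : chain Z e s₀ (n + 1) = step Z (chain Z e s₀ n) (.allC x A) := by rw [chain, hn]
  rw [hn] at hz
  refine ⟨.var (fresh Z (chain Z e s₀ n) (.allC x A)), Set.singleton_subset_iff.2 (hZL' hz.1), ?_⟩
  rcases allC_mem_step (chain Z e s₀ n) x A with h' | h'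
  · exact absurd (SetDer.of_mem ((le_limit (n + 1)).1 (hstep ▸ h')) h)
      (not_setDer_limit hZL' hZ he h₀)
  · exact (le_limit (n + 1)).2 (hstep ▸ h')

end Limit

end Lindenbaum

open Lindenbaum in
theorem exists_primePair_extension {L L' : Set ℕ} (hLL' : Sqsub L L') {Γ₀ Δ₀ : Set Fm}
    (hsyn : ∀ A ∈ Γ₀ ∪ Δ₀, InSyn L A) (hnd : ¬SetDer Γ₀ Δ₀) :
    ∃ Γ Δ, Γ₀ ⊆ Γ ∧ Δ₀ ⊆ Δ ∧ PrimePair L' Γ Δ ∧ LComplete L' Γ Δ := by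
  have : Nonempty {A // InSyn L' A} := ⟨⟨.bot, by simp [InSyn, Fm.vars]⟩⟩
  obtain ⟨e, he⟩ := exists_surjective_nat {A // InSyn L' A}
  have hsurj : ∀ A, InSyn L' A → ∃ n, (e n).1 = A := fun A hA =>
    (he ⟨A, hA⟩).imp fun n hn => congrArg Subtype.val hn
  have hZL' : L' \ L ⊆ L' := Set.sdiff_subset
  have h₀ : Good L' (L' \ L) (Γ₀, Δ₀) := by
    have hvars : pairVars (Γ₀, Δ₀) ⊆ L := Set.iUnion₂_subset hsyn
    refine ⟨hnd, hvars.trans hLL'.1, Set.finite_empty.subset ?_⟩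
    rintro y ⟨hy, -, hyL⟩
    exact hyL (hvars hy)
  have he' : ∀ n, InSyn L' (e n).1 := fun n => (e n).2
  set Λ := limit (L' \ L) (fun n => (e n).1) (Γ₀, Δ₀)
  have hsyn' : ∀ A ∈ Λ.1 ∪ Λ.2, InSyn L' A := fun A => inSyn_of_mem_limit hZL' hLL'.2 he' h₀
  have hcomp : ∀ A, InSyn L' A → A ∈ Λ.1 ∨ A ∈ Λ.2 := fun A => mem_limit_of_inSyn hsurj
  have hle : (Γ₀, Δ₀) ≤ Λ := le_limit 0
  refine ⟨Λ.1, Λ.2, hle.1, hle.2,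
    .of_complete hsyn' hcomp (not_setDer_limit hZL' hLL'.2 he' h₀)
      (fun x A => exists_subst_mem_limit_of_ex hZL' hLL'.2 he' h₀ hsurj)
      (fun x A => exists_subst_mem_limit_of_allC hZL' hLL'.2 he' h₀ hsurj),
    Set.Subset.antisymm hsyn' hcomp⟩

theorem Sqsub.mono_right {L M M' : Set ℕ} (h : Sqsub L M) (hM : M ⊆ M') : Sqsub L M' :=
  ⟨h.1.trans hM, h.2.mono (Set.sdiff_subset_sdiff_left hM)⟩

theorem Sqsub.exists_between {L M : Set ℕ} (h : Sqsub L M) :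
    ∃ L', Sqsub L L' ∧ Sqsub L' M := by
  -- `L'` adds to `L` the even-indexed elements of an enumeration of `M \ L`
  let f : ℕ → ℕ := fun n => h.2.natEmbedding _ n
  have hf : Function.Injective f := Subtype.val_injective.comp (h.2.natEmbedding _).injective
  have hfM : ∀ n, f n ∈ M \ L := fun n => (h.2.natEmbedding _ n).2
  refine ⟨L ∪ Set.range (fun n => f (2 * n)), ⟨Set.subset_union_left, ?_⟩,
    ⟨Set.union_subset h.1 (Set.range_subset_iff.2 fun n => (hfM _).1), ?_⟩⟩
  · refine Set.infinite_of_injective_forall_mem (f := fun n => f (2 * n)) ?_ fun n => ?_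
    · exact fun a b hab => by simpa using hf hab
    · exact ⟨.inr ⟨n, rfl⟩, (hfM _).2⟩
  · refine Set.infinite_of_injective_forall_mem (f := fun n => f (2 * n + 1)) ?_ fun n => ?_
    · exact fun a b hab => by simpa using hf hab
    · refine ⟨(hfM _).1, ?_⟩
      rintro (hL | ⟨m, hm⟩)
      · exact (hfM _).2 hL
      · have := hf hm
        omega

theorem CModel.R_of_persistent_subset {w v : CWorld} (h : {A ∈ w.Γ | A.Persistent} ⊆ v.Γ) :
    CModel.R w v :=
  ⟨fun _ _ hA => h ⟨hA, trivial⟩, fun _ _ hA => h ⟨hA, trivial⟩, fun _ _ hA => h ⟨hA, trivial⟩⟩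

theorem CWorld.exists_succ_of_impI_not_mem (w : CWorld) {B C : Fm}
    (hsyn : InSyn w.L (.impI B C)) (h : Fm.impI B C ∉ w.Γ) :
    ∃ v : CWorld, CModel.R w v ∧ B ∈ v.Γ ∧ C ∈ v.Δ := by
  set Θ := {A ∈ w.Γ | A.Persistent}
  have hnd : ¬SetDer (insert B Θ) {C} := fun hd =>
    h (w.prime.theory _ hsyn ((hd.impI_right fun A hA => hA.2).mono (fun A hA => hA.1) le_rfl))
  have hsyn₀ : ∀ A ∈ insert B Θ ∪ {C}, InSyn w.L A := by
    rintro A ((rfl | hA) | rfl)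
    exacts [(inSyn_impI.1 hsyn).1, w.prime.syntaxL A (.inl hA.1), (inSyn_impI.1 hsyn).2]
  obtain ⟨L', hwL', hL'⟩ := w.hL2.exists_between
  obtain ⟨Γ, Δ, hΓ, hΔ, hprime, hcomp⟩ := exists_primePair_extension hwL' hsyn₀ hnd
  exact ⟨⟨L', Γ, Δ, w.hL1.mono_right hwL'.1, hL', hprime, hcomp⟩,
    CModel.R_of_persistent_subset ((Set.subset_insert B Θ).trans hΓ),
    hΓ (Set.mem_insert B Θ), hΔ rfl⟩

/-- the →ᵢ case of the Truth Lemma for the canonical model: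
for a prime `L`-complete pair `w = (Γ,Δ)_L` and an `L`-formula `B →ᵢ C`,
assuming the truth lemma for `B` and for `C`, one has `B →ᵢ C ∈ Γ` iff
`B →ᵢ C` is satisfied at `w` (each free variable `x` being interpreted by
its own name, the term `x`). -/
theorem truth_lemma_impI (w : CWorld) (B C : Fm)
    (hsyn : InSyn w.L (.impI B C))
    (ihB : ∀ v : CWorld, InSyn v.L B → (B ∈ v.Γ ↔ B.Sat CModel v Tm.var))
    (ihC : ∀ v : CWorld, InSyn v.L C → (C ∈ v.Γ ↔ C.Sat CModel v Tm.var)) :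
    Fm.impI B C ∈ w.Γ ↔ (Fm.impI B C).Sat CModel w Tm.var := by
  constructor
  · intro hBC v hwv hB
    have hBCv : Fm.impI B C ∈ v.Γ := hwv.2.1 B C hBC
    have hv := inSyn_impI.1 (v.prime.syntaxL _ (.inl hBCv))
    exact (ihC v hv.2).1 (v.prime.mem_of_impI_mem hBCv ((ihB v hv.1).2 hB))
  · intro hsat
    by_contra hBC
    obtain ⟨v, hwv, hB, hC⟩ := w.exists_succ_of_impI_not_mem hsyn hBC
    have hBv := (ihB v (v.prime.syntaxL B (.inl hB))).1 hB
    have hCv := (ihC v (v.prime.syntaxL C (.inr hC))).2 (hsat v hwv hBv)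
    exact v.prime.underiv (.of_mem hCv hC)
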